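/- arXiv:math/0612765 — 5 statements merged into one kernel-verified Lean document; each statement's English description precedes it below -/
import Mathlib

section
/- Let T ⊂ Sp(V,ω) be a maximal torus acting irreducibly, A = Z(T, End(V)) its centralizer field, Θ the involution on A given by the symplectic transpose, K = A^Θ the fixed field, and N_{A/K}(a) = Θ(a)·a the norm. Then T = {a ∈ A : N_{A/K}(a) = 1}, i.e., an element a of A lies in Sp(V,ω) if and only if Θ(a)a = 1. -/
/-- For a maximal torus `T ⊂ Sp(V,ω)` acting irreducibly, with centralizer field `A` and
norm `N_{A/K}(a) = Θ(a)·a`, one has `T = {a ∈ A : N_{A/K}(a) = 1}`; i.e. `a ∈ A` lies in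
`Sp(V,ω)` iff `Θ(a)a = 1`. -/
theorem stmt_6 (k : Type*) [Field k] [Fintype k] (hodd : Odd (Fintype.card k))
    (V : Type*) [AddCommGroup V] [Module k V] [FiniteDimensional k V]
    (ω : V →ₗ[k] V →ₗ[k] k)
    (halt : ∀ v : V, ω v v = 0)
    (hnd : ∀ v : V, (∀ u : V, ω v u = 0) → v = 0)
    (T : Subgroup (V ≃ₗ[k] V))
    (hcomm : ∀ g ∈ T, ∀ h ∈ T, g * h = h * g)
    (hsymp : ∀ g ∈ T, ∀ u v : V, ω (g u) (g v) = ω u v)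
    (hirr : ∀ W : Submodule k V, (∀ g ∈ T, ∀ w ∈ W, g w ∈ W) → W = ⊥ ∨ W = ⊤)
    (hmax : ∀ g : V ≃ₗ[k] V, (∀ u v : V, ω (g u) (g v) = ω u v) →
      (∀ h ∈ T, g * h = h * g) → g ∈ T)
    (t : Module.End k V → Module.End k V)
    (ht : ∀ (R : Module.End k V) (v u : V), ω (R v) u = ω v (t R u)) :
    ∀ a : Module.End k V, (∀ g ∈ T, a * g.toLinearMap = g.toLinearMap * a) →
      (((∃ g ∈ T, g.toLinearMap = a) ↔ t a * a = 1) ∧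
       ((Function.Bijective a ∧ ∀ u v : V, ω (a u) (a v) = ω u v) ↔ t a * a = 1)) := by
  -- skew-symmetry of ω
  have hskew : ∀ u v : V, ω u v = - ω v u := by
    intro u v
    have h := halt (u + v)
    simp only [map_add, LinearMap.add_apply, halt u, halt v] at h
    linear_combination h
  -- nondegeneracy in the second slot
  have hnd2 : ∀ w : V, (∀ u : V, ω u w = 0) → w = 0 := by
    intro w hw
    refine hnd w (fun u => ?_)
    rw [hskew, hw u, neg_zero]
  intro a hca
  -- key equivalence: ω-preserving ↔ t a * a = 1
  have key : (∀ u v : V, ω (a u) (a v) = ω u v) ↔ t a * a = 1 := by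
    constructor
    · intro hp
      ext v
      refine sub_eq_zero.mp (hnd2 _ fun u => ?_)
      have h1 : ω u ((t a) (a v)) = ω u v := by
        rw [← ht a u (a v)]; exact hp u v
      simp only [Module.End.mul_apply, Module.End.one_apply, map_sub, h1, sub_self]
    · intro h1 u v
      have : ω (a u) (a v) = ω u ((t a * a) v) := ht a u (a v)
      rw [h1] at this
      simpa using this
  -- t a * a = 1 implies a bijective
  have hbij : t a * a = 1 → Function.Bijective a := by
    intro h1
    have e : ∀ z, (t a) (a z) = z := by
      intro z
      have := LinearMap.ext_iff.mp h1 z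
      simpa [Module.End.mul_apply] using this
    have hinj : Function.Injective a := by
      intro x y hxy
      rw [← e x, ← e y, hxy]
    exact ⟨hinj, (LinearMap.injective_iff_surjective).mp hinj⟩
  constructor
  · constructor
    · rintro ⟨g, hg, rfl⟩
      exact key.mp (hsymp g hg)
    · intro h1
      refine ⟨LinearEquiv.ofBijective a (hbij h1), ?_, rfl⟩
      refine hmax _ (fun u v => key.mpr h1 u v) (fun h hh => ?_)
      apply LinearEquiv.toLinearMap_injective
      ext x
      have hc := LinearMap.ext_iff.mp (hca h hh) x
      simp only [Module.End.mul_apply] at hc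
      simpa using hc
  · constructor
    · rintro ⟨_, hp⟩
      exact key.mp hp
    · intro h1
      exact ⟨hbij h1, key.mpr h1⟩
end

section
/- Let C = {c ∈ F_{q²}* : c^{q+1} = 1} be the kernel of the norm map from F_{q²} to F_q, with q an odd prime power. Then for every c ∈ C with c ≠ 1, one has ((c-1)²/c)^{(q-1)/2} = −c^{(q+1)/2} in F_{q²}. -/
/-!
The Frobenius `x ↦ x ^ q` is additive on `F` and inverts the norm-one element `c`, so
`(c - 1) ^ q = c⁻¹ - 1 = -c⁻¹ (c - 1)`, i.e. `(c - 1) ^ (q - 1) = -c⁻¹`. Hence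
`((c - 1) ^ 2 / c) ^ ((q - 1) / 2) = -c⁻¹ / c ^ ((q - 1) / 2) = -(c ^ ((q + 1) / 2))⁻¹`,
and `c ^ ((q + 1) / 2)` is its own inverse because its square is `c ^ (q + 1) = 1`.
-/

/-- Any divisor `q` of the cardinality of a finite field is a power of its characteristic,
so `x ↦ x ^ q` is additive. -/
theorem FiniteField.sub_pow_of_dvd_card {F : Type*} [Field F] [Fintype F] {q : ℕ}
    (hq : q ∣ Fintype.card F) (a b : F) : (a - b) ^ q = a ^ q - b ^ q := by
  obtain ⟨p, hchar, n, hp, hcard⟩ := FiniteField.card' F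
  rw [hcard, Nat.dvd_prime_pow hp] at hq
  obtain ⟨i, -, rfl⟩ := hq
  have : Fact p.Prime := ⟨hp⟩
  exact sub_pow_char_pow a b i

theorem sub_one_pow_pred_eq_neg_inv {F : Type*} [Field F] {q : ℕ} (hq : 0 < q) {c : F}
    (hfrob : (c - 1) ^ q = c ^ q - 1) (hc : c ^ (q + 1) = 1) (hne : c ≠ 1) :
    (c - 1) ^ (q - 1) = -c⁻¹ := by
  have hc0 : c ≠ 0 := by
    rintro rfl
    simp at hc
  have hcq : c ^ q = c⁻¹ := eq_inv_of_mul_eq_one_left (by rwa [← pow_succ])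
  refine mul_right_cancel₀ (sub_ne_zero.mpr hne) ?_
  calc (c - 1) ^ (q - 1) * (c - 1) = (c - 1) ^ q := by rw [← pow_succ, Nat.sub_add_cancel hq]
    _ = c⁻¹ - 1 := by rw [hfrob, hcq]
    _ = -c⁻¹ * (c - 1) := by field_simp; ring

theorem stmt_7_general (q : ℕ) (hodd : Odd q)
    (F : Type*) [Field F] [Fintype F] (hcard : Fintype.card F = q ^ 2)
    (c : F) (hc : c ^ (q + 1) = 1) (hne : c ≠ 1) :
    ((c - 1) ^ 2 / c) ^ ((q - 1) / 2) = -c ^ ((q + 1) / 2) := by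
  have hfrob : (c - 1) ^ q = c ^ q - 1 := by
    simpa using FiniteField.sub_pow_of_dvd_card (hcard ▸ dvd_pow_self q two_ne_zero) c 1
  have hkey := sub_one_pow_pred_eq_neg_inv hodd.pos hfrob hc hne
  obtain ⟨k, rfl⟩ := hodd
  have hhalf : (c ^ (k + 1)) ^ 2 = 1 := by rw [← pow_mul, ← hc]; ring_nf
  rw [show (2 * k + 1 - 1) / 2 = k by omega, show (2 * k + 1 + 1) / 2 = k + 1 by omega,
    div_pow, ← pow_mul, show 2 * k = 2 * k + 1 - 1 by omega, hkey]
  calc -c⁻¹ / c ^ k = -(c ^ (k + 1))⁻¹ := by rw [pow_succ', mul_inv, neg_div, div_eq_mul_inv]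
    _ = -c ^ (k + 1) := by rw [inv_eq_of_mul_eq_one_left (by rw [← sq, hhalf])]

/-- For `c` in the norm-one subgroup of `F_{q²}*`, `c ≠ 1`, one has
`((c-1)²/c)^((q-1)/2) = -c^((q+1)/2)` in `F_{q²}`. -/
theorem stmt_7 (q : ℕ) (hq : IsPrimePow q) (hodd : Odd q)
    (F : Type*) [Field F] [Fintype F] (hcard : Fintype.card F = q ^ 2)
    (c : F) (hc : c ^ (q + 1) = 1) (hne : c ≠ 1) :
    ((c - 1) ^ 2 / c) ^ ((q - 1) / 2) = -c ^ ((q + 1) / 2) :=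
  stmt_7_general q hodd F hcard c hc hne
end

section
/- Let ρ: SL(2,F_q) → GL(H) be a representation of dimension q whose character satisfies ch_ρ(g) = σ(−det(g−I)) for all g with g−I invertible, where σ is the Legendre character (this is the Weil representation, q odd). Let T ⊂ SL(2,F_q) be a split maximal torus. Then for each character χ of T, the multiplicity of χ in the restriction ρ|_T equals 1 if χ ≠ σ_T and equals 2 if χ = σ_T, where σ_T is the unique quadratic character of T. -/
open scoped Classical in
/-- Multiplicities of characters of a split maximal torus in the Weil representation of
`SL(2, F_q)`: `m_χ = 1` for `χ ≠ σ_T` and `m_χ = 2` for the quadratic character `σ_T`. -/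
theorem stmt_9 (F : Type*) [Field F] [Fintype F] [DecidableEq F]
    (hodd : Odd (Fintype.card F))
    (H : Type*) [AddCommGroup H] [Module ℂ H] [FiniteDimensional ℂ H]
    (ρ : Representation ℂ (Matrix.SpecialLinearGroup (Fin 2) F) H)
    (hdim : Module.finrank ℂ H = Fintype.card F)
    (hch : ∀ g : Matrix.SpecialLinearGroup (Fin 2) F,
      IsUnit ((g : Matrix (Fin 2) (Fin 2) F) - 1).det →
      LinearMap.trace ℂ H (ρ g) =
        ((quadraticChar F (-((g : Matrix (Fin 2) (Fin 2) F) - 1).det) : ℤ) : ℂ))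
    (d : Fˣ → Matrix.SpecialLinearGroup (Fin 2) F)
    (hd : ∀ a : Fˣ, (d a : Matrix (Fin 2) (Fin 2) F) = Matrix.diagonal ![(a : F), (a : F)⁻¹])
    (χ : Fˣ →* ℂˣ) :
    (Fintype.card Fˣ : ℂ)⁻¹ * ∑ a : Fˣ, (↑((χ a)⁻¹) : ℂ) * LinearMap.trace ℂ H (ρ (d a)) =
      if χ * χ = 1 ∧ χ ≠ 1 then 2 else 1 := by
  -- the quadratic character as a homomorphism `Fˣ →* ℂˣ`
  set σu : Fˣ →* ℂˣ :=
    (Units.map (Int.castRingHom ℂ).toMonoidHom).comp (quadraticChar F).toUnitHom with hσu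
  have hσval : ∀ a : Fˣ, ((σu a : ℂˣ) : ℂ) = ((quadraticChar F (a : F) : ℤ) : ℂ) := by
    intro a
    simp [hσu, MulChar.coe_toUnitHom]
  have hchar2 : ringChar F ≠ 2 := by
    intro h
    have := (FiniteField.even_card_iff_char_two (F := F)).mp h
    rw [Nat.odd_iff] at hodd
    omega
  -- `σu` is a nontrivial quadratic character
  have hσsq : σu * σu = 1 := by
    ext a
    have ha : (a : F) ≠ 0 := a.ne_zero
    have h := quadraticChar_sq_one (F := F) ha
    have h2 : (quadraticChar F (a : F) : ℤ) * (quadraticChar F (a : F) : ℤ) = 1 := by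
      rw [← sq]; exact_mod_cast h
    simp only [MonoidHom.mul_apply, Units.val_mul, MonoidHom.one_apply, Units.val_one, hσval]
    exact_mod_cast h2
  have hσne : σu ≠ 1 := by
    obtain ⟨b, hb⟩ := quadraticChar_exists_neg_one hchar2
    have hb0 : b ≠ 0 := by
      intro h; rw [h] at hb; simp at hb
    intro h
    have := hσval (Units.mk0 b hb0)
    rw [h] at this
    simp only [MonoidHom.one_apply, Units.val_one, Units.val_mk0] at this
    rw [hb] at this
    norm_num at this
  -- a generator of `Fˣ`
  obtain ⟨g, hg⟩ := IsCyclic.exists_monoid_generator (α := Fˣ)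
  have hgen : ∀ ψ : Fˣ →* ℂˣ, ψ * ψ = 1 → ψ ≠ 1 → ψ g = -1 := by
    intro ψ hsq hne
    have h1 : ((ψ g : ℂˣ) : ℂ) * ((ψ g : ℂˣ) : ℂ) = 1 := by
      have := congrArg (fun f : Fˣ →* ℂˣ => ((f g : ℂˣ) : ℂ)) hsq
      simpa using this
    rcases mul_self_eq_one_iff.mp h1 with h | h
    · exfalso
      apply hne
      ext x
      obtain ⟨n, rfl⟩ := hg x
      have : ((ψ g : ℂˣ) : ℂ) = 1 := h
      simp [map_pow, Units.ext_iff, Units.val_pow_eq_pow_val, this]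
    · exact Units.ext (by simpa using h)
  -- uniqueness of the quadratic character
  have hkey : ∀ ψ : Fˣ →* ℂˣ, ψ * ψ = 1 → ψ ≠ 1 → ψ = σu := by
    intro ψ hsq hne
    ext x
    obtain ⟨n, rfl⟩ := hg x
    rw [map_pow, map_pow, hgen ψ hsq hne, hgen σu hσsq hσne]
  -- character values on the torus
  have hd1 : d 1 = 1 := by
    apply Subtype.ext
    rw [hd 1]
    have : ![((1 : Fˣ) : F), ((1 : Fˣ) : F)⁻¹] = (1 : Fin 2 → F) := by
      funext i; fin_cases i <;> simp
    rw [this]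
    exact Matrix.diagonal_one
  have htr1 : LinearMap.trace ℂ H (ρ (d 1)) = (Fintype.card F : ℂ) := by
    rw [hd1, map_one, LinearMap.trace_one, hdim]
  have hdet : ∀ a : Fˣ, ((d a : Matrix (Fin 2) (Fin 2) F) - 1).det
      = ((a : F) - 1) * ((a : F)⁻¹ - 1) := by
    intro a
    rw [hd a, Matrix.det_fin_two]
    simp [Matrix.sub_apply, Matrix.diagonal, Matrix.one_apply]
  have htr : ∀ a : Fˣ, a ≠ 1 →
      LinearMap.trace ℂ H (ρ (d a)) = ((quadraticChar F ((a : F)) : ℤ) : ℂ) := by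
    intro a ha
    have ha' : (a : F) ≠ 1 := fun h => ha (Units.ext (by simpa using h))
    have h1 : (a : F) - 1 ≠ 0 := sub_ne_zero.mpr ha'
    have h2 : (a : F)⁻¹ - 1 ≠ 0 := sub_ne_zero.mpr (fun h => ha' (inv_eq_one.mp h))
    have h3 : 1 - (a : F)⁻¹ ≠ 0 := fun h => h2 (by linear_combination -h)
    have hu : IsUnit ((d a : Matrix (Fin 2) (Fin 2) F) - 1).det := by
      rw [hdet a]; exact (mul_ne_zero h1 h2).isUnit
    have hq : quadraticChar F (-(((a : F) - 1) * ((a : F)⁻¹ - 1))) = quadraticChar F (a : F) := by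
      rw [show -(((a : F) - 1) * ((a : F)⁻¹ - 1)) = (a : F) * (1 - (a : F)⁻¹) ^ 2 by
        field_simp; ring]
      rw [map_mul, quadraticChar_sq_one' h3, mul_one]
    rw [hch _ hu, hdet a, hq]
  -- the sum
  set f : Fˣ →* ℂ := (Units.coeHom ℂ).comp (χ⁻¹ * σu) with hf
  have hfval : ∀ a : Fˣ, f a = (↑((χ a)⁻¹) : ℂ) * ((quadraticChar F (a : F) : ℤ) : ℂ) := by
    intro a
    simp only [hf, MonoidHom.coe_comp, Function.comp_apply, Units.coeHom_apply,
      MonoidHom.mul_apply, MonoidHom.inv_apply, Units.val_mul]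
    rw [hσval]
  have hsplit : ∑ a : Fˣ, (↑((χ a)⁻¹) : ℂ) * LinearMap.trace ℂ H (ρ (d a))
      = (Fintype.card F : ℂ) + ((∑ a : Fˣ, f a) - 1) := by
    rw [← Finset.add_sum_erase _ _ (Finset.mem_univ (1 : Fˣ))]
    congr 1
    · rw [htr1]; simp
    · rw [show (1 : ℂ) = f 1 by rw [hfval]; simp,
        ← Finset.add_sum_erase _ f (Finset.mem_univ (1 : Fˣ))]
      ring_nf
      refine Finset.sum_congr rfl fun a ha => ?_
      have ha1 : a ≠ 1 := (Finset.mem_erase.mp ha).1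
      rw [htr a ha1, hfval]
  have hcard : (Fintype.card Fˣ : ℂ) = (Fintype.card F : ℂ) - 1 := by
    have := Fintype.card_eq_card_units_add_one (α := F)
    rw [this]
    push_cast
    ring
  have hcard0 : (Fintype.card Fˣ : ℂ) ≠ 0 := by
    exact_mod_cast Fintype.card_ne_zero
  have hiff : (χ * χ = 1 ∧ χ ≠ 1) ↔ f = 1 := by
    constructor
    · rintro ⟨h1, h2⟩
      have : χ = σu := hkey χ h1 h2
      ext x
      simp [hf, ← this]
    · intro h
      have hψ : χ⁻¹ * σu = 1 := by
        ext x
        have := congrArg (fun (φ : Fˣ →* ℂ) => φ x) h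
        simpa [hf, Units.ext_iff] using this
      have hχσ : χ = σu := by
        ext x
        have hx := congrArg (fun φ : Fˣ →* ℂˣ => φ x) hψ
        simp only [MonoidHom.mul_apply, MonoidHom.inv_apply, MonoidHom.one_apply] at hx
        exact congrArg Units.val (inv_mul_eq_one.mp hx)
      rw [hχσ]
      exact ⟨hσsq, hσne⟩
  rw [hsplit]
  by_cases hc : χ * χ = 1 ∧ χ ≠ 1
  · rw [if_pos hc]
    rw [show (∑ a : Fˣ, f a) = (Fintype.card Fˣ : ℂ) by
      rw [sum_hom_units f]; rw [if_pos (hiff.mp hc)]]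
    rw [show (Fintype.card F : ℂ) + ((Fintype.card Fˣ : ℂ) - 1)
      = 2 * (Fintype.card Fˣ : ℂ) by rw [hcard]; ring]
    rw [mul_comm (2 : ℂ) _, ← mul_assoc, inv_mul_cancel₀ hcard0, one_mul]
  · rw [if_neg hc]
    rw [show (∑ a : Fˣ, f a) = 0 by
      rw [sum_hom_units f, if_neg (fun h => hc (hiff.mpr h))]; norm_num]
    rw [show (Fintype.card F : ℂ) + (0 - 1) = (Fintype.card Fˣ : ℂ) by rw [hcard]; ring]
    exact inv_mul_cancel₀ hcard0
end

section
/- Let ρ be the Weil representation of SL(2,F_q) (q odd, dimension q) with character ch_ρ(g) = σ(−det(g−I)) for g−I invertible, and let T ⊂ SL(2,F_q) be an inert (nonsplit) maximal torus, of order q+1. Then for each character χ of T, the multiplicity of χ in ρ|_T equals 1 if χ ≠ σ_T and equals 0 if χ = σ_T, where σ_T is the unique quadratic character of T. -/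
/-!
For `g ≠ 1` in `T` put `d = -det(g - 1)`. Cayley–Hamilton for `g ∈ SL₂` gives `(g - 1)² = d • g`,
and since `g` commutes with `1`, Frobenius gives `(g - 1)^q = g^q - 1 = -g^q (g - 1)`, because
`g^(q+1) = 1`. Cancelling the invertible `g - 1` yields `d^((q-1)/2) • 1 = -g^((q+1)/2)`. For a
generator `t` of `T` the scalar `t^((q+1)/2)` is not `1`, hence is `-1`; so Euler's criterion gives
`σ(-det(g - 1)) = -σ_T(g)`, where `σ_T(t) = -1`. The character of `ρ` on `T` is therefore
`(q + 1) δ₁ - σ_T`, and orthogonality gives the multiplicity `1 - [χ = σ_T]`. Finally, `σ_T` is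
the only character `χ` of the cyclic group `T` with `χ² = 1 ≠ χ`.
-/

open Subgroup

theorem Matrix.sq_sub_one_eq_neg_det_smul {R : Type*} [CommRing R]
    {g : Matrix (Fin 2) (Fin 2) R} (hg : g.det = 1) : (g - 1) ^ 2 = -(g - 1).det • g := by
  rw [Matrix.det_fin_two] at hg
  ext i j
  fin_cases i <;> fin_cases j <;>
    simp only [Fin.zero_eta, Fin.mk_one, Fin.isValue, sq, Matrix.mul_apply, Matrix.sub_apply,
      Matrix.one_apply, Fin.sum_univ_two, ↓reduceIte, zero_ne_one, one_ne_zero, sub_zero,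
      Matrix.det_fin_two, neg_sub, Matrix.smul_apply, smul_eq_mul]
  · linear_combination (g 0 0 - 1) * hg
  · linear_combination g 0 1 * hg
  · linear_combination g 1 0 * hg
  · linear_combination (g 1 1 - 1) * hg

theorem Matrix.neg_det_sub_one_pow_smul_one {F : Type*} [Field F] [Fintype F]
    (hodd : Odd (Fintype.card F)) {g : Matrix (Fin 2) (Fin 2) F} (hdet : g.det = 1)
    (hg : g ^ (Fintype.card F + 1) = 1) (hunit : IsUnit (g - 1).det) :
    (-(g - 1).det) ^ (Fintype.card F / 2) • (1 : Matrix (Fin 2) (Fin 2) F) =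
      -g ^ ((Fintype.card F + 1) / 2) := by
  set q := Fintype.card F
  set e := q / 2
  set s := (q + 1) / 2
  have hq : 2 * e + 1 = q := by obtain ⟨m, hm⟩ := hodd; omega
  have hes : e + s = q := by omega
  have hfrob : (g - 1) ^ q = g ^ q - 1 := by
    obtain ⟨n, hp, hcard⟩ := FiniteField.card F (ringChar F)
    have : Fact (ringChar F).Prime := ⟨hp⟩
    rw [show q = ringChar F ^ (n : ℕ) from hcard,
      sub_pow_char_pow_of_commute (p := ringChar F) (h := Commute.one_right g), one_pow]
  have hpow : (g - 1) ^ (2 * e) = -g ^ q := by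
    refine ((Matrix.isUnit_iff_isUnit_det _).2 hunit).mul_left_inj.1 ?_
    rw [← pow_succ, hq, hfrob, neg_mul, mul_sub, ← pow_succ, hg, mul_one]
    abel
  calc (-(g - 1).det) ^ e • (1 : Matrix (Fin 2) (Fin 2) F)
      = (-(g - 1).det) ^ e • (g ^ e * g ^ s * g) := by rw [← pow_add, ← pow_succ, hes, hg]
    _ = (g - 1) ^ (2 * e) * g ^ s * g := by
      rw [pow_mul, Matrix.sq_sub_one_eq_neg_det_smul hdet, smul_pow, smul_mul_assoc,
        smul_mul_assoc, mul_assoc]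
    _ = -(g ^ s * g ^ (q + 1)) := by
      rw [hpow, neg_mul, neg_mul, ← pow_add, ← pow_succ, ← pow_add, add_comm q s, add_assoc]
    _ = -g ^ s := by rw [hg, mul_one]

theorem exists_monoidHom_apply_eq_neg_one {G R : Type*} [Group G] [Monoid R] [HasDistribNeg R]
    {g : G} (hg : ∀ x, x ∈ zpowers g) (heven : Even (orderOf g)) :
    ∃ σ : G →* Rˣ, σ g = -1 :=
  ⟨monoidHomOfForallMemZpowers hg (orderOf_dvd_of_pow_eq_one heven.neg_one_pow),
    monoidHomOfForallMemZpowers_apply_gen hg _⟩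

theorem MonoidHom.mul_self_eq_one_and_ne_one_iff {G R : Type*} [Group G] [CommRing R]
    [NoZeroDivisors R] (hR : (-1 : R) ≠ 1) {g : G} (hg : ∀ x, x ∈ zpowers g)
    {σ : G →* Rˣ} (hσ : σ g = -1) (χ : G →* Rˣ) : χ * χ = 1 ∧ χ ≠ 1 ↔ χ = σ := by
  have hR' : (-1 : Rˣ) ≠ 1 := fun h => hR (by simpa using congrArg Units.val h)
  rw [ne_eq, MonoidHom.eq_iff_eq_on_generator hg, MonoidHom.eq_iff_eq_on_generator hg,
    MonoidHom.eq_iff_eq_on_generator hg, MonoidHom.mul_apply, MonoidHom.one_apply, hσ,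
    mul_eq_one_iff_inv_eq, Units.inv_eq_self_iff]
  constructor
  · rintro ⟨h | h, hne⟩
    · exact absurd h hne
    · exact h
  · intro h
    exact ⟨Or.inr h, h.symm ▸ hR'⟩

theorem MonoidHom.sum_inv_mul_apply_eq_ite {G R : Type*} [Group G] [Fintype G] [CommRing R]
    [IsDomain R] (χ σ : G →* Rˣ) [Decidable (χ = σ)] :
    ∑ g, ((χ g)⁻¹ : Rˣ) * (σ g : R) = if χ = σ then (Fintype.card G : R) else 0 := by
  classical
  have h := sum_hom_units ((Units.coeHom R).comp (χ⁻¹ * σ))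
  have hiff : (Units.coeHom R).comp (χ⁻¹ * σ) = 1 ↔ χ = σ := by
    rw [← inv_mul_eq_one (a := χ)]
    simp [DFunLike.ext_iff, Units.ext_iff]
  simpa [hiff] using h

theorem FiniteField.ringChar_ne_two_of_odd_card {F : Type*} [Field F] [Fintype F]
    (hodd : Odd (Fintype.card F)) : ringChar F ≠ 2 := fun h =>
  (Nat.not_even_iff_odd.2 hodd) (Nat.even_iff.2 (FiniteField.even_card_of_char_two h))

section Torus

variable {F : Type*} [Field F] [Fintype F] {T : Subgroup (Matrix.SpecialLinearGroup (Fin 2) F)}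
  [Fintype T]

theorem coe_pow_card_add_one_eq_one (hcard : Fintype.card T = Fintype.card F + 1) (g : T) :
    ((g : Matrix.SpecialLinearGroup (Fin 2) F) : Matrix (Fin 2) (Fin 2) F) ^
      (Fintype.card F + 1) = 1 := by
  rw [← hcard, ← Matrix.SpecialLinearGroup.coe_pow, ← Subgroup.coe_pow, pow_card_eq_one]
  rfl

theorem coe_generator_pow_half_card_eq_neg_one (hodd : Odd (Fintype.card F))
    (hcard : Fintype.card T = Fintype.card F + 1)
    (hreg : ∀ g ∈ T, g ≠ 1 → IsUnit ((g : Matrix (Fin 2) (Fin 2) F) - 1).det)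
    {t : T} (ht : ∀ x, x ∈ zpowers t) :
    ((t : Matrix.SpecialLinearGroup (Fin 2) F) : Matrix (Fin 2) (Fin 2) F) ^
      ((Fintype.card F + 1) / 2) = -1 := by
  have hord : orderOf t = Fintype.card F + 1 := by
    rw [orderOf_eq_card_of_forall_mem_zpowers ht, Nat.card_eq_fintype_card, hcard]
  have hne : ((t : Matrix.SpecialLinearGroup (Fin 2) F) : Matrix (Fin 2) (Fin 2) F) ^
      ((Fintype.card F + 1) / 2) ≠ 1 := by
    intro h
    have ht_pow : t ^ ((Fintype.card F + 1) / 2) = 1 :=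
      Subtype.ext (Subtype.ext (by simpa using h))
    have := Fintype.card_pos (α := F)
    have := Nat.le_of_dvd (by omega) (hord ▸ orderOf_dvd_of_pow_eq_one ht_pow)
    omega
  have ht1 : (t : Matrix.SpecialLinearGroup (Fin 2) F) ≠ 1 := by
    intro h
    exact hne (by rw [h]; simp)
  have hunit := hreg _ t.2 ht1
  have key := Matrix.neg_det_sub_one_pow_smul_one hodd (t : Matrix.SpecialLinearGroup (Fin 2) F).2
    (coe_pow_card_add_one_eq_one hcard t) hunit
  rcases FiniteField.pow_dichotomy (FiniteField.ringChar_ne_two_of_odd_card hodd)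
    (neg_ne_zero.2 hunit.ne_zero) with h | h
  · rw [h, one_smul] at key
    exact neg_eq_iff_eq_neg.1 key.symm
  · rw [h, neg_smul, one_smul, neg_inj] at key
    exact absurd key.symm hne

theorem quadraticChar_neg_det_sub_one_eq_neg [DecidableEq F] (hodd : Odd (Fintype.card F))
    (hcard : Fintype.card T = Fintype.card F + 1)
    (hreg : ∀ g ∈ T, g ≠ 1 → IsUnit ((g : Matrix (Fin 2) (Fin 2) F) - 1).det)
    {t : T} (ht : ∀ x, x ∈ zpowers t) {σ : T →* ℂˣ} (hσ : σ t = -1) {g : T} (hg : g ≠ 1) :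
    ((quadraticChar F (-((g : Matrix (Fin 2) (Fin 2) F) - 1).det) : ℤ) : ℂ) = -(σ g : ℂ) := by
  have hF := FiniteField.ringChar_ne_two_of_odd_card hodd
  obtain ⟨k, rfl⟩ := mem_powers_iff_mem_zpowers.2 (ht g)
  have hunit := hreg _ (t ^ k).2 (fun h => hg (Subtype.ext h))
  have key := Matrix.neg_det_sub_one_pow_smul_one hodd
    (t ^ k : Matrix.SpecialLinearGroup (Fin 2) F).2
    (coe_pow_card_add_one_eq_one hcard (t ^ k)) hunit
  have hpow : (-(((t ^ k : T) : Matrix (Fin 2) (Fin 2) F) - 1).det) ^ (Fintype.card F / 2) =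
      -(-1) ^ k := by
    refine smul_left_injective F (one_ne_zero (α := Matrix (Fin 2) (Fin 2) F)) ?_
    simp only [Subgroup.coe_pow, Matrix.SpecialLinearGroup.coe_pow] at key ⊢
    rw [key, pow_right_comm, coe_generator_pow_half_card_eq_neg_one hodd hcard hreg ht, neg_smul,
      ← Algebra.algebraMap_eq_smul_one, map_pow, map_neg, map_one]
  rw [quadraticChar_eq_pow_of_char_ne_two hF (neg_ne_zero.2 hunit.ne_zero), hpow, map_pow, hσ]
  rcases Nat.even_or_odd k with hk | hk
  · simp [hk.neg_one_pow, Ring.neg_one_ne_one_of_char_ne_two hF]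
  · simp [hk.neg_one_pow]

end Torus

open scoped Classical in
/-- Multiplicities of characters of an inert (nonsplit) maximal torus, of order `q+1`, in
the Weil representation of `SL(2, F_q)`: `m_χ = 1` for `χ ≠ σ_T` and `m_χ = 0` for the
quadratic character `σ_T`. -/
theorem stmt_10 (F : Type*) [Field F] [Fintype F] [DecidableEq F]
    (hodd : Odd (Fintype.card F))
    (H : Type*) [AddCommGroup H] [Module ℂ H] [FiniteDimensional ℂ H]
    (ρ : Representation ℂ (Matrix.SpecialLinearGroup (Fin 2) F) H)
    (hdim : Module.finrank ℂ H = Fintype.card F)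
    (hch : ∀ g : Matrix.SpecialLinearGroup (Fin 2) F,
      IsUnit ((g : Matrix (Fin 2) (Fin 2) F) - 1).det →
      LinearMap.trace ℂ H (ρ g) =
        ((quadraticChar F (-((g : Matrix (Fin 2) (Fin 2) F) - 1).det) : ℤ) : ℂ))
    (T : Subgroup (Matrix.SpecialLinearGroup (Fin 2) F)) [Fintype ↥T]
    (hcard : Fintype.card ↥T = Fintype.card F + 1)
    (hcyc : IsCyclic ↥T)
    (hreg : ∀ g ∈ T, g ≠ 1 → IsUnit ((g : Matrix (Fin 2) (Fin 2) F) - 1).det)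
    (χ : ↥T →* ℂˣ) :
    (Fintype.card ↥T : ℂ)⁻¹ * ∑ g : ↥T, (↑((χ g)⁻¹) : ℂ) * LinearMap.trace ℂ H (ρ ↑g) =
      if χ * χ = 1 ∧ χ ≠ 1 then 0 else 1 := by
  obtain ⟨t, ht⟩ := hcyc.exists_generator
  have hord : orderOf t = Fintype.card F + 1 := by
    rw [orderOf_eq_card_of_forall_mem_zpowers ht, Nat.card_eq_fintype_card, hcard]
  obtain ⟨σ, hσ⟩ := exists_monoidHom_apply_eq_neg_one (R := ℂ) ht (hord ▸ hodd.add_one)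
  have htrace : ∀ g : T, LinearMap.trace ℂ H (ρ g) =
      (if g = 1 then (Fintype.card T : ℂ) else 0) - σ g := by
    intro g
    by_cases hg : g = 1
    · simp [hg, hdim, hcard]
    · rw [if_neg hg, zero_sub, hch _ (hreg _ g.2 fun h => hg (Subtype.ext h)),
        quadraticChar_neg_det_sub_one_eq_neg hodd hcard hreg ht hσ hg]
  simp only [htrace, mul_sub, Finset.sum_sub_distrib, mul_ite, mul_zero, Finset.sum_ite_eq',
    Finset.mem_univ, if_true, map_one, inv_one, Units.val_one, one_mul,
    MonoidHom.sum_inv_mul_apply_eq_ite,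
    MonoidHom.mul_self_eq_one_and_ne_one_iff (by norm_num) ht hσ]
  have hT : (Fintype.card T : ℂ) ≠ 0 := Nat.cast_ne_zero.2 Fintype.card_ne_zero
  split_ifs <;> simp [hT]
end

section
/- Let T ⊂ Sp(V,ω) be a maximal torus over F_q (q odd) acting irreducibly on the 2N-dimensional space V, with centralizer field A = Z(T,End(V)) and K = A^Θ the fixed field of the symplectic-transpose involution. Then V is a 2-dimensional vector space over K, and consequently K ≅ F_{q^N} and [A:K] = 2. -/
section Aux
variable {k V : Type*} [Field k] [AddCommGroup V] [Module k V]
variable (ω : V →ₗ[k] V →ₗ[k] k)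

theorem stmt15_anti (halt : ∀ v : V, ω v v = 0) (u v : V) : ω u v = - ω v u := by
  have h := halt (u + v)
  simp only [map_add, LinearMap.add_apply, halt u, halt v] at h
  linear_combination h

theorem stmt15_rnd (halt : ∀ v : V, ω v v = 0)
    (hnd : ∀ v : V, (∀ u : V, ω v u = 0) → v = 0)
    (x y : V) (h : ∀ w, ω w x = ω w y) : x = y := by
  have hs : x - y = 0 := by
    apply hnd
    intro u
    rw [stmt15_anti ω halt]
    simp [map_sub, h u]
  rw [sub_eq_zero] at hs; exact hs

variable (halt : ∀ v : V, ω v v = 0) (hnd : ∀ v : V, (∀ u : V, ω v u = 0) → v = 0)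
variable (t : Module.End k V → Module.End k V)
variable (ht : ∀ (R : Module.End k V) (v u : V), ω (R v) u = ω v (t R u))

include halt hnd ht in
theorem stmt15_tuniq (R S : Module.End k V)
    (h : ∀ v u : V, ω v (S u) = ω (R v) u) : S = t R := by
  ext u
  exact stmt15_rnd ω halt hnd _ _ fun w => by rw [h w u, ht R w u]

include halt hnd ht in
theorem stmt15_tt (R : Module.End k V) : t (t R) = R := by
  have := stmt15_tuniq ω halt hnd t ht (t R) R (fun v u => by
    rw [stmt15_anti ω halt (t R v) u, ← ht R u v, stmt15_anti ω halt (R u) v]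
    ring)
  exact this.symm

include halt hnd ht in
theorem stmt15_tmul (R S : Module.End k V) : t (R * S) = t S * t R := by
  symm; apply stmt15_tuniq ω halt hnd t ht
  intro v u
  show ω v (t S (t R u)) = ω ((R * S) v) u
  rw [← ht S v (t R u), ← ht R (S v) u]
  rfl

include halt hnd ht in
theorem stmt15_tadd (R S : Module.End k V) : t (R + S) = t R + t S := by
  symm; apply stmt15_tuniq ω halt hnd t ht
  intro v u
  simp only [LinearMap.add_apply, map_add, ← ht R v u, ← ht S v u]

include halt hnd ht in
theorem stmt15_tsmul (c : k) (R : Module.End k V) : t (c • R) = c • t R := by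
  symm; apply stmt15_tuniq ω halt hnd t ht
  intro v u
  simp only [LinearMap.smul_apply, map_smul, smul_eq_mul, ← ht R v u]

include halt hnd ht in
theorem stmt15_tone : t 1 = 1 := by
  symm
  apply stmt15_tuniq ω halt hnd t ht
  intro v u
  rfl

include halt hnd ht in
theorem stmt15_tneg (R : Module.End k V) : t (-R) = - t R := by
  have h := stmt15_tsmul ω halt hnd t ht (-1 : k) R
  simpa using h

include halt hnd ht in
theorem stmt15_tsub (R S : Module.End k V) : t (R - S) = t R - t S := by
  rw [sub_eq_add_neg, stmt15_tadd ω halt hnd t ht, stmt15_tneg ω halt hnd t ht, sub_eq_add_neg]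

include halt hnd ht in
theorem stmt15_tzero : t 0 = 0 := by
  have := stmt15_tsmul ω halt hnd t ht 0 0
  simpa using this

end Aux

/-- For a maximal torus `T` acting irreducibly on a `2N`-dimensional symplectic space `V`
over `F_q`, with centralizer field `A` and `K = A^Θ`: `V` is a 2-dimensional `K`-vector
space, `K ≅ F_{q^N}`, and `[A : K] = 2`. -/
theorem stmt_15 (k : Type*) [Field k] [Fintype k] (hodd : Odd (Fintype.card k))
    (V : Type*) [AddCommGroup V] [Module k V] [FiniteDimensional k V]
    (N : ℕ) (hN : 0 < N) (hdim : Module.finrank k V = 2 * N)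
    (ω : V →ₗ[k] V →ₗ[k] k)
    (halt : ∀ v : V, ω v v = 0)
    (hnd : ∀ v : V, (∀ u : V, ω v u = 0) → v = 0)
    (T : Subgroup (V ≃ₗ[k] V))
    (hcomm : ∀ g ∈ T, ∀ h ∈ T, g * h = h * g)
    (hsymp : ∀ g ∈ T, ∀ u v : V, ω (g u) (g v) = ω u v)
    (hirr : ∀ W : Submodule k V, (∀ g ∈ T, ∀ w ∈ W, g w ∈ W) → W = ⊥ ∨ W = ⊤)
    (hmax : ∀ g : V ≃ₗ[k] V, (∀ u v : V, ω (g u) (g v) = ω u v) →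
      (∀ h ∈ T, g * h = h * g) → g ∈ T)
    (t : Module.End k V → Module.End k V)
    (ht : ∀ (R : Module.End k V) (v u : V), ω (R v) u = ω v (t R u))
    (A : Subalgebra k (Module.End k V))
    (hA : ∀ a : Module.End k V, a ∈ A ↔ ∀ g ∈ T, a * g.toLinearMap = g.toLinearMap * a)
    (K : Subalgebra k (Module.End k V))
    (hK : ∀ a : Module.End k V, a ∈ K ↔ a ∈ A ∧ t a = a) :
    (∃ v₁ v₂ : V, ∀ v : V, ∃! p : ↥K × ↥K,
      v = (↑p.1 : Module.End k V) v₁ + (↑p.2 : Module.End k V) v₂) ∧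
    Nat.card ↥K = Nat.card k ^ N ∧
    Module.finrank k ↥K = N ∧
    Module.finrank k ↥A = 2 * N := by
  classical
  have tuniq := stmt15_tuniq ω halt hnd t ht
  have tt := stmt15_tt ω halt hnd t ht
  have tmul := stmt15_tmul ω halt hnd t ht
  have tadd := stmt15_tadd ω halt hnd t ht
  have tsub := stmt15_tsub ω halt hnd t ht
  have tsmul := stmt15_tsmul ω halt hnd t ht
  have tone := stmt15_tone ω halt hnd t ht
  have tzero := stmt15_tzero ω halt hnd t ht
  -- characteristic is odd
  have h2 : (2 : k) ≠ 0 := by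
    intro h2
    have hp := CharP.char_is_prime k (ringChar k)
    have hd : (ringChar k : ℕ) ∣ 2 :=
      (CharP.cast_eq_zero_iff k (ringChar k) 2).mp (by exact_mod_cast h2)
    have hch : ringChar k = 2 := ((Nat.prime_dvd_prime_iff_eq hp Nat.prime_two).mp hd)
    have h4 := FiniteField.even_card_iff_char_two.mp hch
    rcases hodd with ⟨m, hm⟩
    omega
  -- elements of T, as linear maps, lie in A
  have hmemA : ∀ g ∈ T, (g : V ≃ₗ[k] V).toLinearMap ∈ A := by
    intro g hg
    rw [hA]
    intro h hh
    have hco := hcomm g hg h hh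
    calc g.toLinearMap * h.toLinearMap = (g * h).toLinearMap := rfl
      _ = (h * g).toLinearMap := by rw [hco]
      _ = h.toLinearMap * g.toLinearMap := rfl
  -- transpose of an element of T is the inverse
  have hgt : ∀ g ∈ T, t g.toLinearMap = (g⁻¹ : V ≃ₗ[k] V).toLinearMap := by
    intro g hg
    symm
    apply tuniq
    intro v u
    have h1 : g ((g⁻¹ : V ≃ₗ[k] V) u) = u := g.apply_symm_apply u
    calc ω v ((g⁻¹ : V ≃ₗ[k] V).toLinearMap u)
        = ω (g v) (g ((g⁻¹ : V ≃ₗ[k] V) u)) := (hsymp g hg _ _).symm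
      _ = ω (g v) u := by rw [h1]
      _ = ω (g.toLinearMap v) u := rfl
  -- A is stable under the transpose
  have tA : ∀ a ∈ A, t a ∈ A := by
    intro a ha
    rw [hA]
    intro g hg
    have h1 : t ((g⁻¹ : V ≃ₗ[k] V).toLinearMap) = g.toLinearMap := by
      rw [hgt g⁻¹ (T.inv_mem hg), inv_inv]
    have h2' : a * (g⁻¹ : V ≃ₗ[k] V).toLinearMap = (g⁻¹ : V ≃ₗ[k] V).toLinearMap * a :=
      (hA a).mp ha g⁻¹ (T.inv_mem hg)
    calc t a * g.toLinearMap = t a * t ((g⁻¹ : V ≃ₗ[k] V).toLinearMap) := by rw [h1]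
      _ = t ((g⁻¹ : V ≃ₗ[k] V).toLinearMap * a) := (tmul _ _).symm
      _ = t (a * (g⁻¹ : V ≃ₗ[k] V).toLinearMap) := by rw [h2']
      _ = t ((g⁻¹ : V ≃ₗ[k] V).toLinearMap) * t a := tmul _ _
      _ = g.toLinearMap * t a := by rw [h1]
  -- the subalgebra generated by T
  set B := Algebra.adjoin k (LinearEquiv.toLinearMap '' (T : Set (V ≃ₗ[k] V))) with hB
  have hBA : B ≤ A := by
    apply Algebra.adjoin_le
    rintro x ⟨g, hg, rfl⟩
    exact hmemA g hg
  have commAB : ∀ a ∈ A, ∀ b ∈ B, a * b = b * a := by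
    intro a ha b hb
    induction hb using Algebra.adjoin_induction with
    | mem x hx =>
        obtain ⟨g, hg, rfl⟩ := hx
        exact (hA a).mp ha g hg
    | algebraMap r => exact (Algebra.commutes r a).symm
    | add x y hx hy ihx ihy => rw [mul_add, add_mul, ihx, ihy]
    | mul x y hx hy ihx ihy => rw [← mul_assoc, ihx, mul_assoc, ihy, ← mul_assoc]
  -- a nonzero vector
  have hVnt : Nontrivial V := by
    rw [← Module.finrank_pos_iff (R := k), hdim]
    omega
  obtain ⟨v₀, hv₀⟩ := exists_ne (0 : V)
  -- the evaluation map at v₀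
  let ev : Module.End k V →ₗ[k] V :=
    { toFun := fun f => f v₀
      map_add' := fun f g => rfl
      map_smul' := fun c f => rfl }
  -- the orbit submodule is everything
  have spanning : ∀ v : V, ∃ b ∈ B, b v₀ = v := by
    intro v
    have hstab : ∀ g ∈ T, ∀ w ∈ Submodule.map ev (Subalgebra.toSubmodule B),
        g w ∈ Submodule.map ev (Subalgebra.toSubmodule B) := by
      rintro g hg w ⟨b, hb, rfl⟩
      refine ⟨g.toLinearMap * b, ?_, rfl⟩
      exact (Subalgebra.mem_toSubmodule B).mpr
        (mul_mem (Algebra.subset_adjoin ⟨g, hg, rfl⟩) ((Subalgebra.mem_toSubmodule B).mp hb))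
    have hW : Submodule.map ev (Subalgebra.toSubmodule B) = ⊤ := by
      rcases hirr (Submodule.map ev (Subalgebra.toSubmodule B)) hstab with hbot | htop
      · exfalso
        have : v₀ ∈ Submodule.map ev (Subalgebra.toSubmodule B) :=
          ⟨1, one_mem B, rfl⟩
        rw [hbot] at this
        exact hv₀ this
      · exact htop
    have : v ∈ Submodule.map ev (Subalgebra.toSubmodule B) := by rw [hW]; trivial
    obtain ⟨b, hb, hbv⟩ := this
    exact ⟨b, hb, hbv⟩
  -- injectivity of evaluation on A
  have evinj : ∀ a ∈ A, a v₀ = 0 → a = 0 := by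
    intro a ha h0
    ext v
    obtain ⟨b, hb, rfl⟩ := spanning v
    have : (a * b) v₀ = (b * a) v₀ := by rw [commAB a ha b hb]
    calc a (b v₀) = (a * b) v₀ := rfl
      _ = (b * a) v₀ := this
      _ = b (a v₀) := rfl
      _ = b 0 := by rw [h0]
      _ = (0 : Module.End k V) (b v₀) := by simp
  -- A = B
  have AsubB : ∀ a ∈ A, a ∈ B := by
    intro a ha
    obtain ⟨b, hb, hbv⟩ := spanning (a v₀)
    have hsubA : a - b ∈ A := sub_mem ha (hBA hb)
    have h0 : (a - b) v₀ = 0 := by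
      have : (a - b) v₀ = a v₀ - b v₀ := rfl
      rw [this, hbv, sub_self]
    have := evinj _ hsubA h0
    have hab : a = b := by rwa [sub_eq_zero] at this
    rw [hab]; exact hb
  -- A is commutative
  have commA : ∀ a ∈ A, ∀ b ∈ A, a * b = b * a := fun a ha b hb => commAB a ha b (AsubB b hb)
  -- nonzero elements of A are invertible
  have hinv : ∀ a ∈ A, a ≠ 0 → ∃ c ∈ A, a * c = 1 ∧ c * a = 1 := by
    intro a ha hne
    have hstab : ∀ g ∈ T, ∀ w ∈ LinearMap.ker a, g w ∈ LinearMap.ker a := by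
      intro g hg w hw
      rw [LinearMap.mem_ker] at hw ⊢
      have hco := (hA a).mp ha g hg
      calc a (g w) = (a * g.toLinearMap) w := rfl
        _ = (g.toLinearMap * a) w := by rw [hco]
        _ = g (a w) := rfl
        _ = 0 := by rw [hw]; simp
    have hker : LinearMap.ker a = ⊥ := by
      rcases hirr (LinearMap.ker a) hstab with hbot | htop
      · exact hbot
      · exfalso
        apply hne
        ext v
        have : v ∈ LinearMap.ker a := by rw [htop]; trivial
        simpa using this
    have hinj : Function.Injective a := LinearMap.ker_eq_bot.mp hker
    have hsurj : Function.Surjective a := (LinearMap.injective_iff_surjective).mp hinj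
    let e := LinearEquiv.ofBijective a ⟨hinj, hsurj⟩
    refine ⟨e.symm.toLinearMap, ?_, ?_, ?_⟩
    · rw [hA]
      intro g hg
      have hag := (hA a).mp ha g hg
      have hac : a * e.symm.toLinearMap = 1 := by
        ext v; exact e.apply_symm_apply v
      have hca : e.symm.toLinearMap * a = 1 := by
        ext v; exact e.symm_apply_apply v
      calc e.symm.toLinearMap * g.toLinearMap
          = e.symm.toLinearMap * g.toLinearMap * (a * e.symm.toLinearMap) := by
            rw [hac, mul_one]
        _ = e.symm.toLinearMap * (g.toLinearMap * a) * e.symm.toLinearMap := by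
            rw [mul_assoc, mul_assoc, mul_assoc]
        _ = e.symm.toLinearMap * (a * g.toLinearMap) * e.symm.toLinearMap := by rw [hag]
        _ = (e.symm.toLinearMap * a) * (g.toLinearMap * e.symm.toLinearMap) := by
            rw [mul_assoc, mul_assoc, mul_assoc]
        _ = g.toLinearMap * e.symm.toLinearMap := by rw [hca, one_mul]
    · ext v; exact e.apply_symm_apply v
    · ext v; exact e.symm_apply_apply v
  -- the involution is nontrivial on A
  have hnt : ∃ a ∈ A, t a ≠ a := by
    by_contra hcon
    push_neg at hcon
    have hsq : ∀ g ∈ T, (∀ v : V, g v = v) ∨ (∀ v : V, g v = -v) := by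
      intro g hg
      have hfix := hcon g.toLinearMap (hmemA g hg)
      rw [hgt g hg] at hfix
      have hL2 : g.toLinearMap * g.toLinearMap = 1 := by
        calc g.toLinearMap * g.toLinearMap
            = g.toLinearMap * (g⁻¹ : V ≃ₗ[k] V).toLinearMap := by rw [hfix]
          _ = (g * g⁻¹ : V ≃ₗ[k] V).toLinearMap := rfl
          _ = 1 := by rw [mul_inv_cancel]; rfl
      have hgg : ∀ v : V, g (g v) = v := by
        intro v
        have := congrArg (fun f : Module.End k V => f v) hL2
        simpa using this
      have hstab : ∀ h ∈ T, ∀ w ∈ LinearMap.ker (g.toLinearMap - 1),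
          h w ∈ LinearMap.ker (g.toLinearMap - 1) := by
        intro h hh w hw
        rw [LinearMap.mem_ker] at hw ⊢
        have hco : g.toLinearMap * h.toLinearMap = h.toLinearMap * g.toLinearMap :=
          congrArg LinearEquiv.toLinearMap (hcomm g hg h hh)
        have hgw : g (h w) = h (g w) := by
          have := congrArg (fun f : Module.End k V => f w) hco
          simpa using this
        simp only [LinearMap.sub_apply, Module.End.one_apply] at hw ⊢
        have h2' : g.toLinearMap w - w = 0 := hw
        have h3 : g w = w := by
          have : g w - w = 0 := h2'
          rw [sub_eq_zero] at this
          exact this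
        show g.toLinearMap (h w) - h w = 0
        have h4 : g.toLinearMap (h w) = g (h w) := rfl
        rw [h4, hgw, h3, sub_self]
      rcases hirr (LinearMap.ker (g.toLinearMap - 1)) hstab with hbot | htop
      · right
        intro v
        have hmem : g v + v ∈ LinearMap.ker (g.toLinearMap - 1) := by
          rw [LinearMap.mem_ker]
          show g.toLinearMap (g v + v) - (g v + v) = 0
          have : g.toLinearMap (g v + v) = g (g v) + g v := map_add g.toLinearMap _ _
          rw [this, hgg v]
          abel
        rw [hbot, Submodule.mem_bot] at hmem
        have : g v = -v := by
          rw [← sub_eq_zero]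
          rw [sub_neg_eq_add]
          exact hmem
        exact this
      · left
        intro v
        have hmem : v ∈ LinearMap.ker (g.toLinearMap - 1) := by rw [htop]; trivial
        rw [LinearMap.mem_ker] at hmem
        have h5 : g v - v = 0 := hmem
        rw [sub_eq_zero] at h5
        exact h5
    -- every vector spans
    have hstab' : ∀ g ∈ T, ∀ w ∈ Submodule.span k {v₀}, g w ∈ Submodule.span k {v₀} := by
      intro g hg w hw
      rw [Submodule.mem_span_singleton] at hw ⊢
      obtain ⟨c, rfl⟩ := hw
      rcases hsq g hg with h1 | h1
      · exact ⟨c, by rw [map_smul, h1]⟩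
      · exact ⟨-c, by rw [map_smul, h1]; simp⟩
    have hW' : Submodule.span k {v₀} = ⊤ := by
      rcases hirr (Submodule.span k {v₀}) hstab' with hbot | htop
      · exfalso
        have : v₀ ∈ Submodule.span k {v₀} := Submodule.mem_span_singleton_self v₀
        rw [hbot, Submodule.mem_bot] at this
        exact hv₀ this
      · exact htop
    have hfr : Module.finrank k V = 1 := by
      have h1 := finrank_span_singleton (K := k) hv₀
      rw [hW'] at h1
      rw [← h1]
      exact (finrank_top k V).symm
    omega
  obtain ⟨a₀, ha₀A, ha₀t⟩ := hnt
  set c₀ : Module.End k V := t a₀ - a₀ with hc₀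
  have hc₀A : c₀ ∈ A := sub_mem (tA a₀ ha₀A) ha₀A
  have hc₀ne : c₀ ≠ 0 := sub_ne_zero.mpr ha₀t
  obtain ⟨d, hdA, hcd, hdc⟩ := hinv c₀ hc₀A hc₀ne
  have htc₀ : t c₀ = -c₀ := by rw [hc₀, tsub, tt]; abel
  have htd : t d = -d := by
    have h1 : t c₀ * t d = 1 := by rw [← tmul, hdc, tone]
    have h2' : c₀ * t d = -1 := by
      rw [htc₀, neg_mul] at h1
      exact neg_eq_iff_eq_neg.mp h1
    calc t d = (d * c₀) * t d := by rw [hdc, one_mul]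
      _ = d * (c₀ * t d) := mul_assoc _ _ _
      _ = d * (-1) := by rw [h2']
      _ = -d := by rw [mul_neg_one]
  -- Part 1 : the two-dimensional structure over K
  have part1 : ∀ v : V, ∃! p : ↥K × ↥K,
      v = (↑p.1 : Module.End k V) v₀ + (↑p.2 : Module.End k V) (a₀ v₀) := by
    intro v
    obtain ⟨b, hbB, hbv⟩ := spanning v
    have hbA : b ∈ A := hBA hbB
    set p₂ : Module.End k V := d * (t b - b) with hp₂
    set p₁ : Module.End k V := b - p₂ * a₀ with hp₁
    have hp₂A : p₂ ∈ A := mul_mem hdA (sub_mem (tA b hbA) hbA)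
    have hp₁A : p₁ ∈ A := sub_mem hbA (mul_mem hp₂A ha₀A)
    have htp₂ : t p₂ = p₂ := by
      rw [hp₂, tmul, tsub, tt, htd]
      have hcm := commA d hdA (t b - b) (sub_mem (tA b hbA) hbA)
      calc (b - t b) * -d = (t b - b) * d := by noncomm_ring
        _ = d * (t b - b) := hcm.symm
    have htp₁ : t p₁ = p₁ := by
      have e1 : p₂ * c₀ = t b - b := by
        rw [hp₂]
        calc d * (t b - b) * c₀ = (t b - b) * d * c₀ := by
              rw [commA d hdA (t b - b) (sub_mem (tA b hbA) hbA)]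
          _ = (t b - b) * (d * c₀) := by rw [mul_assoc]
          _ = t b - b := by rw [hdc, mul_one]
      have e2 : t a₀ * p₂ = p₂ * t a₀ := commA (t a₀) (tA a₀ ha₀A) p₂ hp₂A
      rw [hp₁, tsub, tmul, htp₂, e2]
      rw [sub_eq_sub_iff_sub_eq_sub, ← mul_sub, ← hc₀]
      exact e1.symm
    have hsum' : p₁ + p₂ * a₀ = b := by rw [hp₁]; abel
    have hvex : v = p₁ v₀ + p₂ (a₀ v₀) := by
      have h1 : p₁ v₀ + p₂ (a₀ v₀) = (p₁ + p₂ * a₀) v₀ := rfl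
      rw [h1, hsum', hbv]
    refine ⟨(⟨p₁, (hK p₁).mpr ⟨hp₁A, htp₁⟩⟩, ⟨p₂, (hK p₂).mpr ⟨hp₂A, htp₂⟩⟩), hvex, ?_⟩
    rintro ⟨⟨q₁, hq₁⟩, ⟨q₂, hq₂⟩⟩ hq
    obtain ⟨hq₁A, hq₁t⟩ := (hK q₁).mp hq₁
    obtain ⟨hq₂A, hq₂t⟩ := (hK q₂).mp hq₂
    have hq' : v = q₁ v₀ + q₂ (a₀ v₀) := hq
    set y : Module.End k V := (q₁ - p₁) + (q₂ - p₂) * a₀ with hy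
    have hyA : y ∈ A := add_mem (sub_mem hq₁A hp₁A) (mul_mem (sub_mem hq₂A hp₂A) ha₀A)
    have hyv : y v₀ = 0 := by
      have h2'' : y v₀ = (q₁ v₀ + q₂ (a₀ v₀)) - (p₁ v₀ + p₂ (a₀ v₀)) := by
        rw [hy]
        show (q₁ - p₁) v₀ + ((q₂ - p₂) * a₀) v₀ = _
        have e3 : (q₁ - p₁) v₀ = q₁ v₀ - p₁ v₀ := rfl
        have e4 : ((q₂ - p₂) * a₀) v₀ = q₂ (a₀ v₀) - p₂ (a₀ v₀) := rfl
        rw [e3, e4]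
        abel
      rw [h2'', ← hq', ← hvex, sub_self]
    have hy0 : y = 0 := evinj y hyA hyv
    have hty2 : t y = (q₁ - p₁) + (q₂ - p₂) * t a₀ := by
      rw [hy, tadd, tsub, hq₁t, htp₁, tmul, tsub, hq₂t, htp₂,
        commA (t a₀) (tA a₀ ha₀A) (q₂ - p₂) (sub_mem hq₂A hp₂A)]
    have hz : (q₂ - p₂) * c₀ = 0 := by
      have h3 : (q₂ - p₂) * c₀ = t y - y := by
        rw [hty2, hy, hc₀, mul_sub]
        abel
      rw [h3, hy0, tzero, sub_zero]
    have hq₂p : q₂ = p₂ := by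
      have h4 : (q₂ - p₂) * (c₀ * d) = q₂ - p₂ := by rw [hcd, mul_one]
      rw [← mul_assoc, hz, zero_mul] at h4
      rw [← sub_eq_zero]
      exact h4.symm
    have hq₁p : q₁ = p₁ := by
      have h5 : q₁ - p₁ = y - (q₂ - p₂) * a₀ := by rw [hy]; abel
      rw [hy0, hq₂p, sub_self, zero_mul, sub_zero] at h5
      rw [← sub_eq_zero]
      exact h5
    exact Prod.ext (Subtype.ext hq₁p) (Subtype.ext hq₂p)
  -- dimension of A
  let A' := Subalgebra.toSubmodule A
  let φ : ↥A' →ₗ[k] V := ev.comp A'.subtype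
  have hφbij : Function.Bijective φ := by
    constructor
    · intro x y hxy
      apply Subtype.ext
      have hxA : (x : Module.End k V) ∈ A := (Subalgebra.mem_toSubmodule A).mp x.2
      have hyA : (y : Module.End k V) ∈ A := (Subalgebra.mem_toSubmodule A).mp y.2
      have h0 : ((x : Module.End k V) - y) v₀ = 0 := by
        have hxy' : (x : Module.End k V) v₀ = (y : Module.End k V) v₀ := hxy
        show (x : Module.End k V) v₀ - (y : Module.End k V) v₀ = 0
        rw [hxy', sub_self]
      have := evinj _ (sub_mem hxA hyA) h0
      rwa [sub_eq_zero] at this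
    · intro v
      obtain ⟨b, hb, hbv⟩ := spanning v
      exact ⟨⟨b, (Subalgebra.mem_toSubmodule A).mpr (hBA hb)⟩, hbv⟩
  have hArank' : Module.finrank k ↥A' = 2 * N := by
    rw [(LinearEquiv.ofBijective φ hφbij).finrank_eq, hdim]
  have hArank : Module.finrank k ↥A = 2 * N := by
    rw [← Subalgebra.finrank_toSubmodule]; exact hArank'
  -- decomposition of A into symmetric and antisymmetric parts
  let tL : Module.End k V →ₗ[k] Module.End k V :=
    { toFun := t, map_add' := tadd, map_smul' := tsmul }
  let M := A' ⊓ LinearMap.ker (tL + LinearMap.id)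
  have hMmem : ∀ x : Module.End k V, x ∈ M ↔ x ∈ A ∧ t x = -x := by
    intro x
    constructor
    · rintro ⟨h1, h2⟩
      refine ⟨(Subalgebra.mem_toSubmodule A).mp h1, ?_⟩
      have h3 : t x + x = 0 := h2
      exact eq_neg_of_add_eq_zero_left h3
    · rintro ⟨h1, h2⟩
      refine ⟨(Subalgebra.mem_toSubmodule A).mpr h1, ?_⟩
      show t x + x = 0
      rw [h2, neg_add_cancel]
  have hKmem : ∀ x : Module.End k V, x ∈ Subalgebra.toSubmodule K ↔ x ∈ A ∧ t x = x := by
    intro x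
    rw [Subalgebra.mem_toSubmodule, hK]
  have hsup : Subalgebra.toSubmodule K ⊔ M = A' := by
    apply le_antisymm
    · apply sup_le
      · intro x hx
        exact (Subalgebra.mem_toSubmodule A).mpr ((hKmem x).mp hx).1
      · exact inf_le_left
    · intro a ha
      have haA : a ∈ A := (Subalgebra.mem_toSubmodule A).mp ha
      rw [Submodule.mem_sup]
      refine ⟨(2:k)⁻¹ • (a + t a), ?_, (2:k)⁻¹ • (a - t a), ?_, ?_⟩
      · refine (hKmem _).mpr ⟨A.smul_mem (add_mem haA (tA a haA)) _, ?_⟩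
        rw [tsmul, tadd, tt, add_comm]
      · refine (hMmem _).mpr ⟨A.smul_mem (sub_mem haA (tA a haA)) _, ?_⟩
        rw [tsmul, tsub, tt, ← smul_neg, neg_sub]
      · rw [← smul_add]
        have h6 : (a + t a) + (a - t a) = (2:k) • a := by rw [two_smul]; abel
        rw [h6, smul_smul, inv_mul_cancel₀ h2, one_smul]
  have hinf : Subalgebra.toSubmodule K ⊓ M = ⊥ := by
    rw [Submodule.eq_bot_iff]
    rintro x ⟨hx1, hx2⟩
    have e1 := ((hKmem x).mp hx1).2
    have e2 := ((hMmem x).mp hx2).2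
    have hxx : x = -x := e1.symm.trans e2
    have e3 : x + x = 0 := by
      nth_rewrite 2 [hxx]
      exact add_neg_cancel x
    have e4 : (2:k) • x = 0 := by rw [two_smul]; exact e3
    rcases smul_eq_zero.mp e4 with h | h
    · exact absurd h h2
    · exact h
  -- K and M have the same dimension
  have hfK : ∀ x : ↥(Subalgebra.toSubmodule K),
      (LinearMap.mulLeft k c₀).comp (Subalgebra.toSubmodule K).subtype x ∈ M := by
    intro x
    obtain ⟨hxA, hxt⟩ := (hKmem (x : Module.End k V)).mp x.2
    refine (hMmem _).mpr ⟨mul_mem hc₀A hxA, ?_⟩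
    show t (c₀ * (x : Module.End k V)) = -(c₀ * (x : Module.End k V))
    rw [tmul, hxt, htc₀, mul_neg, commA _ hxA _ hc₀A]
  have hgM : ∀ y : ↥M,
      (LinearMap.mulLeft k d).comp M.subtype y ∈ Subalgebra.toSubmodule K := by
    intro y
    obtain ⟨hyA, hyt⟩ := (hMmem (y : Module.End k V)).mp y.2
    refine (hKmem _).mpr ⟨mul_mem hdA hyA, ?_⟩
    show t (d * (y : Module.End k V)) = d * (y : Module.End k V)
    rw [tmul, hyt, htd, neg_mul, mul_neg, neg_neg, commA _ hyA _ hdA]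
  let f := LinearMap.codRestrict M ((LinearMap.mulLeft k c₀).comp (Subalgebra.toSubmodule K).subtype) hfK
  let g := LinearMap.codRestrict (Subalgebra.toSubmodule K) ((LinearMap.mulLeft k d).comp M.subtype) hgM
  have hfg : f.comp g = LinearMap.id := by
    refine LinearMap.ext fun y => Subtype.ext ?_
    show c₀ * (d * (y : Module.End k V)) = (y : Module.End k V)
    rw [← mul_assoc, hcd, one_mul]
  have hgf : g.comp f = LinearMap.id := by
    refine LinearMap.ext fun x => Subtype.ext ?_
    show d * (c₀ * (x : Module.End k V)) = (x : Module.End k V)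
    rw [← mul_assoc, hdc, one_mul]
  have hKM : Module.finrank k ↥(Subalgebra.toSubmodule K) = Module.finrank k ↥M :=
    (LinearEquiv.ofLinear f g hfg hgf).finrank_eq
  have hsum := Submodule.finrank_sup_add_finrank_inf_eq (Subalgebra.toSubmodule K) M
  rw [hsup, hinf, hArank', finrank_bot] at hsum
  have hKrank' : Module.finrank k ↥(Subalgebra.toSubmodule K) = N := by omega
  have hKrank : Module.finrank k ↥K = N := by
    rw [← Subalgebra.finrank_toSubmodule]; exact hKrank'
  -- cardinality
  haveI : Finite (Module.End k V) := Module.finite_of_finite k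
  haveI : Fintype ↥K := Fintype.ofFinite _
  have hcard : Nat.card ↥K = Nat.card k ^ N := by
    rw [Nat.card_eq_fintype_card, Nat.card_eq_fintype_card,
      Module.card_eq_pow_finrank (K := k) (V := ↥K), hKrank]
  exact ⟨⟨v₀, a₀ v₀, part1⟩, hcard, hKrank, hArank⟩
end
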